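/- For any indexed root ideal (Ψ, γ) of length ℓ with γ_ℓ = 0, the Catalan function H(Ψ; γ) equals H(Ψ̂; γ̂), where Ψ̂ = {(i,j) ∈ Ψ : j < ℓ} (a root ideal of length ℓ−1) and γ̂ = (γ_1, …, γ_{ℓ-1}). -/
import Mathlib


open MvPolynomial Finset
open scoped Classical

noncomputable section

/-- Model of the ring of symmetric functions over a field `K`:
the polynomial ring `K[p₁, p₂, …]` in the power sums, where `X n ↦ p_{n+1}`. -/
abbrev SymFn (K : Type) [Field K] : Type := MvPolynomial ℕ K

/-- Complete homogeneous symmetric functions, defined via Newton's identity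
`(d+1) h_{d+1} = ∑_{i=1}^{d+1} p_i h_{d+1-i}`. -/
noncomputable def hcomp (K : Type) [Field K] : ℕ → SymFn K
  | 0 => 1
  | d + 1 => ((d + 1 : K)⁻¹) • ∑ i ∈ Finset.range (d + 1), X i * hcomp K (d - i)
termination_by d => d
decreasing_by omega

/-- Elementary symmetric functions, defined via Newton's identity
`(d+1) e_{d+1} = ∑_{i=1}^{d+1} (-1)^{i-1} p_i e_{d+1-i}`. -/
noncomputable def esym (K : Type) [Field K] : ℕ → SymFn K
  | 0 => 1
  | d + 1 => ((d + 1 : K)⁻¹) •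
      ∑ i ∈ Finset.range (d + 1), ((-1 : K) ^ i) • (X i * esym K (d - i))
termination_by d => d
decreasing_by omega

/-- `h_d` for integer `d`, with `h_d = 0` for `d < 0` and `h_0 = 1`. -/
noncomputable def hZ (K : Type) [Field K] (d : ℤ) : SymFn K :=
  if 0 ≤ d then hcomp K d.toNat else 0

/-- `e_d` for integer `d`, with `e_d = 0` for `d < 0` and `e_0 = 1`. -/
noncomputable def eZ (K : Type) [Field K] (d : ℤ) : SymFn K :=
  if 0 ≤ d then esym K d.toNat else 0

/-- The generalized Schur function `s_γ = det(h_{γ_i + j - i})` (Jacobi–Trudi). -/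
noncomputable def sJT (K : Type) [Field K] (ℓ : ℕ) (γ : Fin ℓ → ℤ) : SymFn K :=
  Matrix.det (Matrix.of fun i j : Fin ℓ => hZ K (γ i + (j.val : ℤ) - (i.val : ℤ)))

/-- The constant `z_λ = ∏ i^{m_i} m_i!`, in terms of the exponent vector of a
monomial in the power sums (`X n ↦ p_{n+1}`). -/
noncomputable def zee (K : Type) [Field K] (m : ℕ →₀ ℕ) : K :=
  m.prod fun n k => ((n : K) + 1) ^ k * (Nat.factorial k : K)

/-- The Hall inner product, determined by `⟨p_λ, p_μ⟩ = δ_{λμ} z_λ`. -/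
noncomputable def hall (K : Type) [Field K] (f g : SymFn K) : K :=
  ∑ m ∈ f.support, MvPolynomial.coeff m f * MvPolynomial.coeff m g * zee K m

/-- A root ideal: an upper order ideal of `Δ⁺_ℓ = {(i,j) : i < j}` for the order
`(a,b) ≤ (c,d) ↔ a ≥ c ∧ b ≤ d`. -/
def IsRootIdeal (ℓ : ℕ) (Ψ : Finset (Fin ℓ × Fin ℓ)) : Prop :=
  (∀ p ∈ Ψ, p.1 < p.2) ∧
    ∀ p ∈ Ψ, ∀ q : Fin ℓ × Fin ℓ, q.1 ≤ p.1 → p.2 ≤ q.2 → q ∈ Ψ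

/-- The Catalan function `H(Ψ; γ) = ∏_{(i,j) ∈ Ψ} (1 - t R_{ij})^{-1} s_γ`,
expanded as `∑_n t^{|n|} s_{γ + ∑_α n(α) ε(α)}` over multiplicity functions `n`
supported on `Ψ` (all but finitely many terms vanish). -/
noncomputable def catalanH (K : Type) [Field K] (t : K) (ℓ : ℕ)
    (Ψ : Finset (Fin ℓ × Fin ℓ)) (γ : Fin ℓ → ℤ) : SymFn K :=
  ∑ᶠ n : Fin ℓ × Fin ℓ → ℕ,
    if ∀ q, q ∉ Ψ → n q = 0 then
      (t ^ (∑ q : Fin ℓ × Fin ℓ, n q)) •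
        sJT K ℓ (fun i => γ i + ∑ j : Fin ℓ, ((n (i, j) : ℤ) - (n (j, i) : ℤ)))
    else 0

/-- The ground field `ℚ(t)`. -/
abbrev KK : Type := RatFunc ℚ

/-- The parameter `t ∈ ℚ(t)`. -/
noncomputable def tt : KK := RatFunc.X

/-- The full set of positive roots `Δ⁺_ℓ`. -/
def deltaPlus (ℓ : ℕ) : Finset (Fin ℓ × Fin ℓ) :=
  Finset.univ.filter fun p => p.1 < p.2

/-- The `k`-Schur root ideal `Δ^k(μ) = {(i,j) ∈ Δ⁺_ℓ : k - μ_i + i < j}`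
(indices of rows/columns here are 0-based, the defining inequality is the
1-based one from the paper). -/
def deltaK (ℓ k : ℕ) (μ : Fin ℓ → ℤ) : Finset (Fin ℓ × Fin ℓ) :=
  Finset.univ.filter fun p =>
    p.1 < p.2 ∧ (k : ℤ) - μ p.1 + (p.1.val : ℤ) < (p.2.val : ℤ)

/-- Partial sums of the Garsia–Jing vertex operator
`B_m = ∑_{i,j ≥ 0} (-1)^i t^j h_{m+i+j} e_i^⊥ h_j^⊥`. -/
noncomputable def jingPartial (K : Type) [Field K] (t : K)
    (ep hp : ℕ → Module.End K (SymFn K)) (m : ℤ) (N : ℕ) (f : SymFn K) : SymFn K :=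
  ∑ i ∈ Finset.range N, ∑ j ∈ Finset.range N,
    ((-1 : K) ^ i * t ^ j) • (hZ K (m + (i : ℤ) + (j : ℤ)) * (ep i (hp j f)))

/-- `ep d` is the skewing operator `e_d^⊥`, `hp d` is `h_d^⊥` (adjoints of
multiplication with respect to the Hall inner product), and `B m` is the
Garsia–Jing vertex operator `B_m` (on each `f` the defining double series has
only finitely many nonzero terms, i.e., its partial sums stabilize to `B m f`). -/
def IsJingFamily (K : Type) [Field K] (t : K)
    (ep hp : ℕ → Module.End K (SymFn K)) (B : ℤ → Module.End K (SymFn K)) : Prop :=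
  (∀ (d : ℕ) (f g : SymFn K), hall K (ep d f) g = hall K f (eZ K (d : ℤ) * g)) ∧
  (∀ (d : ℕ) (f g : SymFn K), hall K (hp d f) g = hall K f (hZ K (d : ℤ) * g)) ∧
  (∀ (m : ℤ) (f : SymFn K), ∃ N₀ : ℕ, ∀ N ≥ N₀, B m f = jingPartial K t ep hp m N f)

end

noncomputable section AuxProof

lemma hZ_of_neg (K : Type) [Field K] {d : ℤ} (h : d < 0) : hZ K d = 0 := by
  simp [hZ, not_le.mpr h]

lemma hZ_zero' (K : Type) [Field K] : hZ K 0 = 1 := by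
  simp [hZ, hcomp]

lemma sJT_last_neg (K : Type) [Field K] (ℓ : ℕ) (δ : Fin (ℓ + 1) → ℤ)
    (h : δ (Fin.last ℓ) < 0) : sJT K (ℓ + 1) δ = 0 := by
  apply Matrix.det_eq_zero_of_row_eq_zero (Fin.last ℓ)
  intro j
  simp only [Matrix.of_apply]
  apply hZ_of_neg
  have hj : (j : ℕ) ≤ ℓ := Fin.is_le j
  simp only [Fin.val_last]
  omega

lemma sJT_last_zero (K : Type) [Field K] (ℓ : ℕ) (δ : Fin (ℓ + 1) → ℤ)
    (h : δ (Fin.last ℓ) = 0) :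
    sJT K (ℓ + 1) δ = sJT K ℓ (fun a => δ a.castSucc) := by
  unfold sJT
  rw [Matrix.det_succ_row _ (Fin.last ℓ), Finset.sum_eq_single (Fin.last ℓ)]
  · rw [Fin.succAbove_last]
    have hsub : (Matrix.of fun i j : Fin (ℓ + 1) =>
          hZ K (δ i + (j.val : ℤ) - (i.val : ℤ))).submatrix Fin.castSucc Fin.castSucc
        = Matrix.of fun i j : Fin ℓ =>
            hZ K (δ i.castSucc + (j.val : ℤ) - (i.val : ℤ)) := by
      ext i j
      simp [Matrix.submatrix_apply]
    rw [hsub]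
    have hentry : (Matrix.of fun i j : Fin (ℓ + 1) =>
        hZ K (δ i + (j.val : ℤ) - (i.val : ℤ))) (Fin.last ℓ) (Fin.last ℓ) = 1 := by
      simp [h, hZ_zero']
    have hsign : ((-1 : SymFn K) ^ ((Fin.last ℓ : ℕ) + (Fin.last ℓ : ℕ))) = 1 :=
      Even.neg_one_pow ⟨ℓ, by simp [Fin.val_last, two_mul]⟩
    rw [hentry, hsign, one_mul, one_mul]
  · intro j _ hj
    have hjl : (j : ℕ) < ℓ := Fin.val_lt_last hj
    have hentry : (Matrix.of fun i j : Fin (ℓ + 1) =>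
        hZ K (δ i + (j.val : ℤ) - (i.val : ℤ))) (Fin.last ℓ) j = 0 := by
      simp only [Matrix.of_apply, Fin.val_last]
      exact hZ_of_neg K (by omega)
    rw [hentry, mul_zero, zero_mul]
  · intro h; exact absurd (Finset.mem_univ _) h

/-- Extension of a multiplicity function on `Fin ℓ × Fin ℓ` by zero. -/
def ext0 {ℓ : ℕ} (m : Fin ℓ × Fin ℓ → ℕ) (q : Fin (ℓ + 1) × Fin (ℓ + 1)) : ℕ :=
  if h1 : (q.1 : ℕ) < ℓ then
    if h2 : (q.2 : ℕ) < ℓ then m (⟨q.1, h1⟩, ⟨q.2, h2⟩) else 0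
  else 0

lemma Fin.eq_last_of_not_lt' {ℓ : ℕ} {q : Fin (ℓ + 1)} (h : ¬ (q : ℕ) < ℓ) :
    q = Fin.last ℓ := by
  have := q.is_lt
  exact Fin.ext (by simp only [Fin.val_last]; omega)

lemma ext0_castSucc {ℓ : ℕ} (m : Fin ℓ × Fin ℓ → ℕ) (a b : Fin ℓ) :
    ext0 m (a.castSucc, b.castSucc) = m (a, b) := by
  simp [ext0, a.is_lt, b.is_lt]

lemma ext0_fst_last {ℓ : ℕ} (m : Fin ℓ × Fin ℓ → ℕ) (b : Fin (ℓ + 1)) :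
    ext0 m (Fin.last ℓ, b) = 0 := by
  simp [ext0]

lemma ext0_snd_last {ℓ : ℕ} (m : Fin ℓ × Fin ℓ → ℕ) (a : Fin (ℓ + 1)) :
    ext0 m (a, Fin.last ℓ) = 0 := by
  unfold ext0
  split <;> simp

lemma ext0_injective {ℓ : ℕ} : Function.Injective (ext0 (ℓ := ℓ)) := by
  intro m1 m2 h
  funext p
  obtain ⟨a, b⟩ := p
  have := congrFun h (a.castSucc, b.castSucc)
  simpa [ext0_castSucc] using this

lemma mem_range_ext0 {ℓ : ℕ} (n : Fin (ℓ + 1) × Fin (ℓ + 1) → ℕ)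
    (h1 : ∀ b, n (Fin.last ℓ, b) = 0) (h2 : ∀ a, n (a, Fin.last ℓ) = 0) :
    n ∈ Set.range (ext0 (ℓ := ℓ)) := by
  refine ⟨fun p => n (p.1.castSucc, p.2.castSucc), funext fun q => ?_⟩
  obtain ⟨q1, q2⟩ := q
  by_cases hq1 : (q1 : ℕ) < ℓ
  · by_cases hq2 : (q2 : ℕ) < ℓ
    · have e1 : (⟨(q1 : ℕ), hq1⟩ : Fin ℓ).castSucc = q1 := Fin.ext rfl
      have e2 : (⟨(q2 : ℕ), hq2⟩ : Fin ℓ).castSucc = q2 := Fin.ext rfl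
      simp [ext0, hq1, hq2, e1, e2]
    · rw [Fin.eq_last_of_not_lt' hq2, ext0_snd_last, h2]
  · rw [Fin.eq_last_of_not_lt' hq1, ext0_fst_last, h1]

lemma finsum_eq_of_injective {α β M : Type*} [AddCommMonoid M] (g : β → α)
    (hg : Function.Injective g) {F : α → M} {G : β → M}
    (h0 : ∀ a, F a ≠ 0 → a ∈ Set.range g) (h : ∀ b, F (g b) = G b) :
    ∑ᶠ a, F a = ∑ᶠ b, G b := by
  rw [← finsum_mem_univ F,
    finsum_mem_inter_support_eq' F Set.univ (Set.range g)
      (fun x hx => by simpa using h0 x hx),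
    finsum_mem_range hg]
  exact finsum_congr h

end AuxProof

/-- **Removing a trailing zero.** If `γ_ℓ = 0` then
`H(Ψ; γ) = H(Ψ̂; γ̂)` where `Ψ̂ = {(i,j) ∈ Ψ : j < ℓ}` and `γ̂ = (γ_1, …, γ_{ℓ-1})`. -/
theorem catalan_trailing_zero (ℓ : ℕ) (Ψ : Finset (Fin (ℓ + 1) × Fin (ℓ + 1)))
    (hΨ : IsRootIdeal (ℓ + 1) Ψ) (γ : Fin (ℓ + 1) → ℤ) (hγ : γ (Fin.last ℓ) = 0) :
    catalanH KK tt (ℓ + 1) Ψ γ =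
      catalanH KK tt ℓ
        (Finset.univ.filter fun p : Fin ℓ × Fin ℓ => (p.1.castSucc, p.2.castSucc) ∈ Ψ)
        (fun a => γ a.castSucc) := by
  classical
  unfold catalanH
  refine finsum_eq_of_injective ext0 ext0_injective ?_ ?_
  · -- vanishing off the range of ext0
    intro n hn
    by_cases hsupp : ∀ q, q ∉ Ψ → n q = 0
    · have hrow : ∀ b, n (Fin.last ℓ, b) = 0 := by
        intro b
        by_contra hb
        have hmem : (Fin.last ℓ, b) ∈ Ψ := by
          by_contra hm; exact hb (hsupp _ hm)
        have hlt := hΨ.1 _ hmem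
        exact absurd hlt (by simpa using (Fin.le_last b).not_gt)
      refine mem_range_ext0 n hrow fun a => ?_
      by_contra ha
      have hδ : γ (Fin.last ℓ) +
          ∑ j : Fin (ℓ + 1), ((n (Fin.last ℓ, j) : ℤ) - (n (j, Fin.last ℓ) : ℤ)) < 0 := by
        rw [hγ, zero_add]
        have hsum : ∑ j : Fin (ℓ + 1), ((n (Fin.last ℓ, j) : ℤ) - (n (j, Fin.last ℓ) : ℤ))
            = - ∑ j : Fin (ℓ + 1), (n (j, Fin.last ℓ) : ℤ) := by
          rw [← Finset.sum_neg_distrib]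
          refine Finset.sum_congr rfl fun j _ => ?_
          rw [hrow j]; ring
        rw [hsum, neg_lt, neg_zero]
        have hpos : (0 : ℤ) < (n (a, Fin.last ℓ) : ℤ) :=
          Int.natCast_pos.mpr (Nat.pos_of_ne_zero ha)
        exact lt_of_lt_of_le hpos
          (Finset.single_le_sum (f := fun j => (n (j, Fin.last ℓ) : ℤ))
            (fun _ _ => Int.natCast_nonneg _) (Finset.mem_univ a))
      have hz := sJT_last_neg KK ℓ
        (fun i => γ i + ∑ j : Fin (ℓ + 1), ((n (i, j) : ℤ) - (n (j, i) : ℤ))) hδ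
      rw [if_pos hsupp, hz, smul_zero] at hn
      exact hn rfl
    · rw [if_neg hsupp] at hn
      exact absurd rfl hn
  · -- matching terms
    intro m
    have hcond : (∀ q, q ∉ Ψ → ext0 m q = 0) ↔
        (∀ p, p ∉ (Finset.univ.filter fun p : Fin ℓ × Fin ℓ =>
          (p.1.castSucc, p.2.castSucc) ∈ Ψ) → m p = 0) := by
      constructor
      · intro h p hp
        obtain ⟨a, b⟩ := p
        have hnot : (a.castSucc, b.castSucc) ∉ Ψ := fun hmem =>
          hp (Finset.mem_filter.mpr ⟨Finset.mem_univ _, hmem⟩)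
        have := h _ hnot
        rwa [ext0_castSucc] at this
      · intro h q hq
        obtain ⟨q1, q2⟩ := q
        by_cases h1 : (q1 : ℕ) < ℓ
        · by_cases h2 : (q2 : ℕ) < ℓ
          · have e1 : (⟨(q1 : ℕ), h1⟩ : Fin ℓ).castSucc = q1 := Fin.ext rfl
            have e2 : (⟨(q2 : ℕ), h2⟩ : Fin ℓ).castSucc = q2 := Fin.ext rfl
            have hnot : (⟨(q1 : ℕ), h1⟩, ⟨(q2 : ℕ), h2⟩) ∉
                (Finset.univ.filter fun p : Fin ℓ × Fin ℓ =>
                  (p.1.castSucc, p.2.castSucc) ∈ Ψ) := by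
              intro hm
              have := (Finset.mem_filter.mp hm).2
              rw [e1, e2] at this
              exact hq this
            have := h _ hnot
            show ext0 m (q1, q2) = 0
            rw [← e1, ← e2, ext0_castSucc]
            exact this
          · rw [Fin.eq_last_of_not_lt' h2, ext0_snd_last]
        · rw [Fin.eq_last_of_not_lt' h1, ext0_fst_last]
    by_cases hc : ∀ p, p ∉ (Finset.univ.filter fun p : Fin ℓ × Fin ℓ =>
        (p.1.castSucc, p.2.castSucc) ∈ Ψ) → m p = 0
    · rw [if_pos (hcond.mpr hc), if_pos hc]
      have hsum : ∑ q : Fin (ℓ + 1) × Fin (ℓ + 1), ext0 m q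
          = ∑ p : Fin ℓ × Fin ℓ, m p := by
        rw [Fintype.sum_prod_type, Fintype.sum_prod_type, Fin.sum_univ_castSucc]
        simp only [ext0_fst_last, Finset.sum_const_zero, add_zero]
        refine Finset.sum_congr rfl fun a _ => ?_
        rw [Fin.sum_univ_castSucc]
        simp [ext0_castSucc, ext0_snd_last]
      rw [hsum]
      have hlast : (fun i => γ i + ∑ j : Fin (ℓ + 1),
          ((ext0 m (i, j) : ℤ) - (ext0 m (j, i) : ℤ))) (Fin.last ℓ) = 0 := by
        simp [ext0_fst_last, ext0_snd_last, hγ]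
      rw [sJT_last_zero KK ℓ _ hlast]
      refine congrArg (fun f => (tt ^ ∑ p : Fin ℓ × Fin ℓ, m p) • f)
        (congrArg (sJT KK ℓ) (funext fun a => ?_))
      rw [Fin.sum_univ_castSucc]
      simp [ext0_castSucc, ext0_fst_last, ext0_snd_last]
    · rw [if_neg (fun h => hc (hcond.mp h)), if_neg hc]
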